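/- Let k be an algebraically closed field of characteristic p > 0, u = 1 + ε ∈ GL_n(k) unipotent with ε^p = 0, and let λ : k^× → GL_n(k) be a group homomorphism given by a diagonal cocharacter λ(a) = diag(a^{d₁},…,a^{dₙ}). Suppose the limit v := lim_{a→0} λ(a) u λ(a)^{-1} exists (i.e., the matrix entries of λ(a)uλ(a)^{-1}, which are Laurent monomials times fixed entries, have no negative powers of a). Then for every t ∈ k, lim_{a→0} λ(a) u^t λ(a)^{-1} exists and equals v^t, where powers are the truncated binomial powers. -/
import Mathlib


/-- Truncated binomial coefficient `C(t, i) = t(t-1)⋯(t-i+1)/i!` for `t` in a field. -/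
noncomputable def binomC {k : Type*} [Field k] (t : k) (i : ℕ) : k :=
  (∏ j ∈ Finset.range i, (t - j)) / (Nat.factorial i : k)

/-- Truncated binomial power `u^t = (1+ε)^t := Σ_{i<p} C(t,i) ε^i`. -/
noncomputable def upow {k : Type*} [Field k] {n : ℕ}
    (ε : Matrix (Fin n) (Fin n) k) (p : ℕ) (t : k) : Matrix (Fin n) (Fin n) k :=
  ∑ i ∈ Finset.range p, binomC t i • ε ^ i

section Aux

variable {k : Type*} [Field k] {n : ℕ} (d : Fin n → ℤ)

private def Lower (M : Matrix (Fin n) (Fin n) k) : Prop :=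
  ∀ i j, d i < d j → M i j = 0

private lemma lower_one : Lower d (1 : Matrix (Fin n) (Fin n) k) := by
  intro i j h
  rw [Matrix.one_apply_ne]
  rintro rfl
  exact lt_irrefl _ h

private lemma lower_mul {M N : Matrix (Fin n) (Fin n) k} (hM : Lower d M) (hN : Lower d N) :
    Lower d (M * N) := by
  intro i j h
  rw [Matrix.mul_apply]
  apply Finset.sum_eq_zero
  intro l _
  rcases lt_or_ge (d i) (d l) with hl | hl
  · rw [hM i l hl, zero_mul]
  · rw [hN l j (lt_of_le_of_lt hl h), mul_zero]

private lemma lower_pow {M : Matrix (Fin n) (Fin n) k} (hM : Lower d M) (m : ℕ) :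
    Lower d (M ^ m) := by
  induction m with
  | zero => simpa using lower_one d
  | succ m ih => rw [pow_succ]; exact lower_mul d ih hM

private def proj (M : Matrix (Fin n) (Fin n) k) : Matrix (Fin n) (Fin n) k :=
  Matrix.of fun i j => if d i = d j then M i j else 0

private lemma proj_one : proj d (1 : Matrix (Fin n) (Fin n) k) = 1 := by
  ext i j
  by_cases h : i = j
  · subst h; simp [proj]
  · simp [proj, Matrix.one_apply_ne h]

private lemma proj_mul {M N : Matrix (Fin n) (Fin n) k} (hM : Lower d M) (hN : Lower d N) :
    proj d (M * N) = proj d M * proj d N := by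
  ext i j
  simp only [proj, Matrix.of_apply, Matrix.mul_apply]
  by_cases h : d i = d j
  · rw [if_pos h]
    apply Finset.sum_congr rfl
    intro l _
    by_cases hl : d i = d l
    · rw [if_pos hl, if_pos (hl ▸ h)]
    · rw [if_neg hl]
      rcases lt_or_ge (d i) (d l) with h1 | h1
      · rw [hM i l h1, zero_mul, zero_mul]
      · have hlj : d l < d j := h ▸ (h1.lt_of_ne (fun e => hl e.symm))
        rw [hN l j hlj, mul_zero, zero_mul]
  · rw [if_neg h]
    symm
    apply Finset.sum_eq_zero
    intro l _
    by_cases h1 : d i = d l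
    · rw [if_neg (fun h2 => h (h1.trans h2)), mul_zero]
    · rw [if_neg h1, zero_mul]

end Aux

section Aux2

variable {k : Type*} [Field k] {n : ℕ} (d : Fin n → ℤ)

private lemma proj_pow {M : Matrix (Fin n) (Fin n) k} (hM : Lower d M) (m : ℕ) :
    proj d (M ^ m) = (proj d M) ^ m := by
  induction m with
  | zero => simpa using proj_one d
  | succ m ih => rw [pow_succ, proj_mul d (lower_pow d hM m) hM, ih, pow_succ]

private lemma proj_sum {ι : Type*} (s : Finset ι) (f : ι → Matrix (Fin n) (Fin n) k) :
    proj d (∑ i ∈ s, f i) = ∑ i ∈ s, proj d (f i) := by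
  ext a b
  by_cases h : d a = d b <;> simp [proj, Matrix.sum_apply, h]

private lemma proj_smul (c : k) (M : Matrix (Fin n) (Fin n) k) :
    proj d (c • M) = c • proj d M := by
  ext a b
  by_cases h : d a = d b <;> simp [proj, h]

end Aux2

/-- Let `λ(a) = diag(a^{d₁},…,a^{dₙ})` and `u = 1 + ε` unipotent of order `p`. Conjugation
by `λ(a)` scales the `(i,j)` entry by `a^{dᵢ-dⱼ}`, so the limit `v = lim_{a→0} λ(a)uλ(a)⁻¹`
exists iff `ε i j = 0` whenever `d i < d j`, and then `v = 1 + εᵥ` where `εᵥ` keeps exactly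
the entries with `d i = d j`. In that case for every `t`, `lim_{a→0} λ(a)u^tλ(a)⁻¹` exists
and equals `v^t`. -/
theorem stmt14 {k : Type*} [Field k] [IsAlgClosed k] {p : ℕ} [Fact p.Prime] [CharP k p]
    {n : ℕ} (ε : Matrix (Fin n) (Fin n) k) (hε : ε ^ p = 0) (d : Fin n → ℤ)
    (hlim : ∀ i j, d i < d j → ε i j = 0) (t : k) :
    (∀ i j, d i < d j → upow ε p t i j = 0) ∧
    (Matrix.of fun i j => if d i = d j then upow ε p t i j else 0) =
      upow (Matrix.of fun i j => if d i = d j then ε i j else 0) p t := by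
  have hL : Lower d ε := hlim
  constructor
  · intro i j h
    rw [upow, Matrix.sum_apply]
    apply Finset.sum_eq_zero
    intro m _
    rw [Matrix.smul_apply, lower_pow d hL m i j h, smul_zero]
  · show proj d (upow ε p t) = upow (proj d ε) p t
    rw [upow, upow, proj_sum]
    apply Finset.sum_congr rfl
    intro m _
    rw [proj_smul, proj_pow d hL m]
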